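/- Let E¹ = dx₁, E² = dx₂, E³ = dx₃ - x₁dx₂, E⁴ = dx₄ and set θ¹ = E¹∧E³ - e^{-(λ(x₄)+μ(x₄))} E²∧E⁴ and θ² = e^{-μ(x₄)} E¹∧E⁴ + e^{-λ(x₄)} E²∧E³. Then θ¹ and e^{λ(x₄)}θ² are closed J_{λ,μ}-anti-invariant 2-forms on ℝ⁴, and at every point they are linearly independent and span the space of J_{λ,μ}-anti-invariant 2-forms. -/

import Mathlib

noncomputable section

/-- ℝ⁴ with coordinates (x₁, x₂, x₃, x₄) indexed by 0, 1, 2, 3. -/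
abbrev E4 : Type := Fin 4 → ℝ

/-- Lie bracket of vector fields on ℝ⁴. -/
def lieBracket (X Y : E4 → E4) (p : E4) : E4 :=
  fderiv ℝ Y p (X p) - fderiv ℝ X p (Y p)

/-- Nijenhuis tensor `N_J(X,Y) = [JX,JY] - [X,Y] - J[JX,Y] - J[X,JY]`. -/
def nijenhuis (J : E4 → E4 → E4) (X Y : E4 → E4) (p : E4) : E4 :=
  lieBracket (fun x => J x (X x)) (fun x => J x (Y x)) p - lieBracket X Y p
    - J p (lieBracket (fun x => J x (X x)) Y p)
    - J p (lieBracket X (fun x => J x (Y x)) p)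

/-- The frame vector field `E₁ = ∂x₁`. -/
def EKT1 (_ : E4) : E4 := Pi.single 0 1

/-- The frame vector field `E₂ = ∂x₂ + x₁ ∂x₃`. -/
def EKT2 (p : E4) : E4 := Pi.single 1 1 + p 0 • (Pi.single 2 1 : E4)

/-- The frame vector field `E₃ = ∂x₃`. -/
def EKT3 (_ : E4) : E4 := Pi.single 2 1

/-- The frame vector field `E₄ = ∂x₄`. -/
def EKT4 (_ : E4) : E4 := Pi.single 3 1

/-- The almost complex structure `J_{λ,μ}`, defined by
`J E₁ = e^{λ(x₄)} E₂`, `J E₂ = -e^{-λ(x₄)} E₁`, `J E₃ = e^{μ(x₄)} E₄`,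
`J E₄ = -e^{-μ(x₄)} E₃`, expressed in the coordinate frame `(∂x₁, ∂x₂, ∂x₃, ∂x₄)`. -/
def JKT (lam mu : ℝ → ℝ) (p : E4) (v : E4) : E4 :=
  ![-Real.exp (-lam (p 3)) * v 1,
    Real.exp (lam (p 3)) * v 0,
    Real.exp (lam (p 3)) * v 0 * p 0 - Real.exp (-mu (p 3)) * v 3,
    Real.exp (mu (p 3)) * (v 2 - p 0 * v 1)]

/-- Exterior derivative of a 2-form on ℝ⁴ (given as a point-dependent bilinear form). -/
def extDeriv2 (ω : E4 → E4 → E4 → ℝ) (p u v w : E4) : ℝ :=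
  fderiv ℝ (fun x => ω x v w) p u - fderiv ℝ (fun x => ω x u w) p v
    + fderiv ℝ (fun x => ω x u v) p w

/-- The 2-form `θ¹ = E¹∧E³ - e^{-(λ(x₄)+μ(x₄))} E²∧E⁴`, where `E¹ = dx₁`, `E² = dx₂`,
`E³ = dx₃ - x₁ dx₂`, `E⁴ = dx₄`. -/
def theta1 (lam mu : ℝ → ℝ) (p u v : E4) : ℝ :=
  (u 0 * (v 2 - p 0 * v 1) - (u 2 - p 0 * u 1) * v 0)
    - Real.exp (-(lam (p 3) + mu (p 3))) * (u 1 * v 3 - u 3 * v 1)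

/-- The 2-form `θ² = e^{-μ(x₄)} E¹∧E⁴ + e^{-λ(x₄)} E²∧E³`. -/
def theta2 (lam mu : ℝ → ℝ) (p u v : E4) : ℝ :=
  Real.exp (-mu (p 3)) * (u 0 * v 3 - u 3 * v 0)
    + Real.exp (-lam (p 3)) * (u 1 * (v 2 - p 0 * v 1) - (u 2 - p 0 * u 1) * v 1)


/-- Auxiliary basis vectors. -/
def s0 : E4 := ![1,0,0,0]
def s1 : E4 := ![0,1,0,0]
def s2 : E4 := ![0,0,1,0]
def s3 : E4 := ![0,0,0,1]

lemma basis_expand (u : E4) : u 0 • s0 + u 1 • s1 + u 2 • s2 + u 3 • s3 = u := by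
  funext i
  fin_cases i <;> simp [s0, s1, s2, s3]

lemma fderiv_aux (h : ℝ → ℝ) (hh : Differentiable ℝ h) (A B C : ℝ) (p u : E4) :
    fderiv ℝ (fun x : E4 => A + B * x 0 + C * h (x 3)) p u
      = B * u 0 + C * deriv h (p 3) * u 3 := by
  have h0 : HasFDerivAt (fun x : E4 => x 0) (ContinuousLinearMap.proj 0 : E4 →L[ℝ] ℝ) p :=
    (ContinuousLinearMap.proj 0 : E4 →L[ℝ] ℝ).hasFDerivAt
  have h3 : HasFDerivAt (fun x : E4 => x 3) (ContinuousLinearMap.proj 3 : E4 →L[ℝ] ℝ) p :=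
    (ContinuousLinearMap.proj 3 : E4 →L[ℝ] ℝ).hasFDerivAt
  have hh3 : HasFDerivAt (fun x : E4 => h (x 3))
      (deriv h (p 3) • (ContinuousLinearMap.proj 3 : E4 →L[ℝ] ℝ)) p :=
    (hh (p 3)).hasDerivAt.comp_hasFDerivAt p h3
  have H : HasFDerivAt (fun x : E4 => A + B * x 0 + C * h (x 3))
      ((B • (ContinuousLinearMap.proj 0 : E4 →L[ℝ] ℝ)) +
        (C • (deriv h (p 3) • (ContinuousLinearMap.proj 3 : E4 →L[ℝ] ℝ)))) p := by
    have := ((hasFDerivAt_const A p).add (h0.const_mul B)).add (hh3.const_mul C)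
    refine this.congr_fderiv ?_
    simp
  rw [H.fderiv]
  simp [ContinuousLinearMap.proj]
  ring

/-- With `E¹ = dx₁`, `E² = dx₂`, `E³ = dx₃ - x₁dx₂`, `E⁴ = dx₄`,
`θ¹ = E¹∧E³ - e^{-(λ(x₄)+μ(x₄))} E²∧E⁴` and `θ² = e^{-μ(x₄)} E¹∧E⁴ + e^{-λ(x₄)} E²∧E³`,
the 2-forms `θ¹` and `e^{λ(x₄)} θ²` are closed `J_{λ,μ}`-anti-invariant 2-forms on ℝ⁴,
and at every point they are linearly independent and span the space of
`J_{λ,μ}`-anti-invariant 2-forms. -/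
theorem theta_closed_antiInvariant_span (lam mu : ℝ → ℝ)
    (hlam : ContDiff ℝ (⊤ : ℕ∞) lam) (hmu : ContDiff ℝ (⊤ : ℕ∞) mu) :
    -- θ¹ and e^{λ(x₄)}θ² are closed
    (∀ p u v w : E4, extDeriv2 (theta1 lam mu) p u v w = 0) ∧
    (∀ p u v w : E4,
      extDeriv2 (fun x => Real.exp (lam (x 3)) • theta2 lam mu x) p u v w = 0) ∧
    -- θ¹ and e^{λ(x₄)}θ² are J_{λ,μ}-anti-invariant
    (∀ p u v : E4,
      theta1 lam mu p (JKT lam mu p u) (JKT lam mu p v) = -theta1 lam mu p u v) ∧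
    (∀ p u v : E4,
      Real.exp (lam (p 3)) * theta2 lam mu p (JKT lam mu p u) (JKT lam mu p v) =
        -(Real.exp (lam (p 3)) * theta2 lam mu p u v)) ∧
    -- at every point they are linearly independent …
    (∀ (p : E4) (c₁ c₂ : ℝ),
      (∀ u v : E4,
        c₁ * theta1 lam mu p u v + c₂ * (Real.exp (lam (p 3)) * theta2 lam mu p u v) = 0)
      → c₁ = 0 ∧ c₂ = 0) ∧
    -- … and they span the J_{λ,μ}-anti-invariant 2-forms: every alternating bilinear
    -- form φ at p with φ(Ju, Jv) = -φ(u,v) is a linear combination of them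
    (∀ (p : E4) (φ : E4 → E4 → ℝ),
      (∀ u u' v : E4, φ (u + u') v = φ u v + φ u' v) →
      (∀ (c : ℝ) (u v : E4), φ (c • u) v = c * φ u v) →
      (∀ u v : E4, φ u v = -φ v u) →
      (∀ u v : E4, φ (JKT lam mu p u) (JKT lam mu p v) = -φ u v) →
      ∃ c₁ c₂ : ℝ, ∀ u v : E4,
        φ u v = c₁ * theta1 lam mu p u v
          + c₂ * (Real.exp (lam (p 3)) * theta2 lam mu p u v)) := by
  constructor
  · -- θ¹ is closed
    intro p u v w
    set g : ℝ → ℝ := fun t => Real.exp (-(lam t + mu t)) with hg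
    have hgd : Differentiable ℝ g :=
      Real.differentiable_exp.comp
        ((hlam.differentiable (by simp)).add (hmu.differentiable (by simp))).neg
    have key : ∀ a b : E4, fderiv ℝ (fun x => theta1 lam mu x a b) p
        = fderiv ℝ (fun x : E4 => (a 0 * b 2 - a 2 * b 0)
            + (-(a 0 * b 1 - a 1 * b 0)) * x 0 + (-(a 1 * b 3 - a 3 * b 1)) * g (x 3)) p := by
      intro a b
      congr 1
      funext x
      simp only [theta1, hg]
      ring
    simp only [extDeriv2, key, fderiv_aux g hgd]
    ring
  constructor
  · -- e^λ θ² is closed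
    intro p u v w
    set g : ℝ → ℝ := fun t => Real.exp (lam t - mu t) with hg
    have hgd : Differentiable ℝ g :=
      Real.differentiable_exp.comp
        ((hlam.differentiable (by simp)).sub (hmu.differentiable (by simp)))
    have key : ∀ a b : E4,
        fderiv ℝ (fun x => (Real.exp (lam (x 3)) • theta2 lam mu x) a b) p
        = fderiv ℝ (fun x : E4 => (a 1 * b 2 - a 2 * b 1)
            + (0 : ℝ) * x 0 + (a 0 * b 3 - a 3 * b 0) * g (x 3)) p := by
      intro a b
      congr 1
      funext x
      simp only [theta2, hg, Pi.smul_apply, smul_eq_mul]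
      rw [Real.exp_sub, Real.exp_neg, Real.exp_neg]
      field_simp
      ring
    simp only [extDeriv2, key, fderiv_aux g hgd]
    ring
  constructor
  · -- θ¹ is anti-invariant
    intro p u v
    simp only [theta1, JKT, Matrix.cons_val_zero, Matrix.cons_val_one, Matrix.head_cons,
      Matrix.cons_val_two, Matrix.tail_cons, Matrix.cons_val_three, Real.exp_neg, Real.exp_add]
    have h1 := Real.exp_ne_zero (lam (p 3))
    have h2 := Real.exp_ne_zero (mu (p 3))
    field_simp
    ring
  constructor
  · -- e^λ θ² is anti-invariant
    intro p u v
    simp only [theta2, JKT, Matrix.cons_val_zero, Matrix.cons_val_one, Matrix.head_cons,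
      Matrix.cons_val_two, Matrix.tail_cons, Matrix.cons_val_three, Real.exp_neg, Real.exp_add]
    have h1 := Real.exp_ne_zero (lam (p 3))
    have h2 := Real.exp_ne_zero (mu (p 3))
    field_simp
    ring
  constructor
  · -- linear independence
    intro p c₁ c₂ h
    have h1 := h ![1,0,0,0] ![0,0,1,0]
    have h2 := h ![1,0,0,0] ![0,0,0,1]
    simp only [theta1, theta2, Matrix.cons_val_zero, Matrix.cons_val_one, Matrix.head_cons,
      Matrix.cons_val_two, Matrix.tail_cons, Matrix.cons_val_three] at h1 h2
    have e1 := Real.exp_ne_zero (lam (p 3))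
    have e2 := Real.exp_ne_zero (mu (p 3))
    constructor
    · nlinarith [h1]
    · have hc : c₂ * (Real.exp (lam (p 3)) * Real.exp (-mu (p 3))) = 0 := by nlinarith [h2]
      have hne : Real.exp (lam (p 3)) * Real.exp (-mu (p 3)) ≠ 0 :=
        mul_ne_zero e1 (Real.exp_ne_zero _)
      exact (mul_eq_zero.mp hc).resolve_right hne
  · -- spanning
    intro p φ hadd hsmul hskew hJ
    have hadd2 : ∀ u v v' : E4, φ u (v + v') = φ u v + φ u v' := by
      intro u v v'; rw [hskew, hadd, hskew u v, hskew u v']; ring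
    have hsmul2 : ∀ (c : ℝ) (u v : E4), φ u (c • v) = c * φ u v := by
      intro c u v; rw [hskew, hsmul, hskew u v]; ring
    have hzero : ∀ u : E4, φ u u = 0 := by intro u; have := hskew u u; linarith
    have master : ∀ u v : E4, φ u v =
        (u 0 * v 1 - u 1 * v 0) * φ s0 s1
        + (u 0 * v 2 - u 2 * v 0) * φ s0 s2
        + (u 0 * v 3 - u 3 * v 0) * φ s0 s3
        + (u 1 * v 2 - u 2 * v 1) * φ s1 s2
        + (u 1 * v 3 - u 3 * v 1) * φ s1 s3
        + (u 2 * v 3 - u 3 * v 2) * φ s2 s3 := by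
      intro u v
      conv_lhs => rw [← basis_expand u, ← basis_expand v]
      simp only [hadd, hadd2, hsmul, hsmul2, hzero]
      rw [hskew s1 s0, hskew s2 s0, hskew s3 s0, hskew s2 s1, hskew s3 s1, hskew s3 s2]
      ring
    set a := Real.exp (lam (p 3)) with ha
    set b := Real.exp (mu (p 3)) with hb
    have ha0 : a ≠ 0 := Real.exp_ne_zero _
    have hb0 : b ≠ 0 := Real.exp_ne_zero _
    have hA : Real.exp (-lam (p 3)) = a⁻¹ := by rw [ha, Real.exp_neg]
    have hB : Real.exp (-mu (p 3)) = b⁻¹ := by rw [hb, Real.exp_neg]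
    have hAB : Real.exp (-(lam (p 3) + mu (p 3))) = a⁻¹ * b⁻¹ := by
      rw [Real.exp_neg, Real.exp_add, mul_inv, ha, hb]
    have c23 := hJ s2 s3
    have c03 := hJ s0 s3
    have c02 := hJ s0 s2
    have c01 := hJ s0 s1
    rw [master, master] at c23 c03 c02 c01
    simp only [JKT, s0, s1, s2, s3, Matrix.cons_val_zero, Matrix.cons_val_one,
      Matrix.head_cons, Matrix.cons_val_two, Matrix.tail_cons, Matrix.cons_val_three,
      hA, hB] at c23 c03 c02 c01
    ring_nf at c23 c03 c02 c01
    simp only [← ha, ← hb] at c23 c03 c02 c01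
    set f01 := φ ![1,0,0,0] ![0,1,0,0] with hf01
    set f02 := φ ![1,0,0,0] ![0,0,1,0] with hf02
    set f03 := φ ![1,0,0,0] ![0,0,0,1] with hf03
    set f12 := φ ![0,1,0,0] ![0,0,1,0] with hf12
    set f13 := φ ![0,1,0,0] ![0,0,0,1] with hf13
    set f23 := φ ![0,0,1,0] ![0,0,0,1] with hf23
    have r1 : f23 = 0 := by field_simp at c23; linarith
    have r2 : f03 = a * b⁻¹ * f12 := by field_simp at c03 ⊢; linarith
    have r3 : f13 = -(a⁻¹ * b⁻¹ * f02) := by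
      rw [r1] at c02; field_simp at c02 ⊢; linarith
    have r4 : f01 = -(p 0 * f02) := by
      rw [r1, r3] at c01; field_simp at c01
      have h2 : (a * b) * (2 * (f01 + p 0 * f02)) = 0 := by linear_combination (a * b) * c01
      have h3 := (mul_eq_zero.mp h2).resolve_left (mul_ne_zero ha0 hb0)
      linarith
    refine ⟨f02, f12, ?_⟩
    intro u v
    rw [master u v]
    simp only [theta1, theta2, s0, s1, s2, s3, hA, hB, hAB, r1, r2, r3, r4,
      ← hf01, ← hf02, ← hf03, ← hf12, ← hf13, ← hf23]
    field_simp
    ring
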